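/- Fix an integer t ≥ 0 and assume f is convex on 𝓑. Suppose v : Ω → 𝓑 is a random vector independent of ℋ_t whose mean γ̄ = E[v] satisfies ⟨a_i, γ̄⟩ ≤ b_i for all i ∈ {1,…,N}, and suppose that almost surely V⟨∇f(γ_{t−1}), x_t⟩ + ⟨Q(t), A x_t⟩ ≤ V⟨∇f(γ_{t−1}), v⟩ + ⟨Q(t), A v⟩. Then E[ V⟨∇f(γ_{t−1}), x_t − γ_{t−1}⟩ ] + E[ ⟨Q(t), A x_t − b⟩ ] ≤ V ( f(γ̄) − E[f(γ_{t−1})] ). -/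

import Mathlib

/-!
Compare the decision `x t` with the randomized competitor `v`, which `x t` beats pointwise.
Since `v` is independent of `ℋ t`, while the gradient `f' (γ t)` and the queues `Q t` are
`ℋ t`-measurable, the competitor's expected terms are those of its mean `γbar`: the queue term
becomes `∑ i, E[Q t i] * (⟪a i, γbar⟫ - b i) ≤ 0` by feasibility of `γbar`, and the gradient term
becomes `E ⟪f' (γ t), γbar - γ t⟫ ≤ f γbar - E f (γ t)` by convexity of `f`.
-/

open MeasureTheory ProbabilityTheory
open scoped RealInnerProductSpace

theorem Convex.mem_of_movingAverage {E : Type*} [AddCommGroup E] [Module ℝ E] {s : Set E}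
    (hs : Convex ℝ s) {η : ℝ} (hη0 : 0 ≤ η) (hη1 : η ≤ 1) {γ x : ℕ → E} (h0 : γ 0 ∈ s)
    (hx : ∀ t, x t ∈ s) (hrec : ∀ t, γ (t + 1) = (1 - η) • γ t + η • x t) : ∀ t, γ t ∈ s
  | 0 => h0
  | t + 1 => hrec t ▸ hs (hs.mem_of_movingAverage hη0 hη1 h0 hx hrec t) (hx t) (by linarith) hη0
      (by ring)

theorem MeasureTheory.Filtration.measurable_of_recursion {Ω α β : Type*} {m0 : MeasurableSpace Ω}
    [MeasurableSpace α] [MeasurableSpace β] {ℱ : Filtration ℕ m0} {Z : ℕ → Ω → α}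
    {x : ℕ → Ω → β} {F : α → β → α} (hF : Measurable (Function.uncurry F))
    (h0 : Measurable[ℱ 0] (Z 0)) (hx : ∀ t, Measurable[ℱ (t + 1)] (x t))
    (hrec : ∀ t ω, Z (t + 1) ω = F (Z t ω) (x t ω)) : ∀ t, Measurable[ℱ t] (Z t)
  | 0 => h0
  | t + 1 => by
    rw [funext (hrec t)]
    exact hF.comp
      (((ℱ.measurable_of_recursion hF h0 hx hrec t).mono (ℱ.mono t.le_succ) le_rfl).prodMk (hx t))

theorem ProbabilityTheory.indepFun_of_indep_comap {Ω β γ : Type*} {m m0 : MeasurableSpace Ω}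
    [MeasurableSpace β] [MeasurableSpace γ] {μ : Measure Ω} {v : Ω → β} {g : Ω → γ}
    (h : Indep (MeasurableSpace.comap v inferInstance) m μ) (hg : Measurable[m] g) :
    IndepFun g v μ :=
  indep_of_indep_of_le_left h.symm hg.comap_le

section

variable {E : Type*} [NormedAddCommGroup E] [InnerProductSpace ℝ E]

theorem mem_Icc_of_queue_recursion {x : ℕ → E} {q : ℕ → ℝ} {a : E} {b R : ℝ}
    (hx : ∀ t, ‖x t‖ ≤ R) (h0 : q 0 = 0) (hrec : ∀ t, q (t + 1) = max (q t + ⟪a, x t⟫ - b) 0) :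
    ∀ t : ℕ, q t ∈ Set.Icc 0 (t * (‖a‖ * R + |b|))
  | 0 => by simp [h0]
  | t + 1 => by
    have ih := mem_Icc_of_queue_recursion hx h0 hrec t
    have hinner : ⟪a, x t⟫ ≤ ‖a‖ * R :=
      (real_inner_le_norm _ _).trans (mul_le_mul_of_nonneg_left (hx t) (norm_nonneg _))
    have hc : 0 ≤ ‖a‖ * R + |b| :=
      add_nonneg (mul_nonneg (norm_nonneg _) ((norm_nonneg _).trans (hx 0))) (abs_nonneg _)
    rw [hrec]
    refine ⟨le_max_right _ _, max_le ?_ (by positivity)⟩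
    push_cast
    linarith [ih.2, neg_abs_le b]

variable {Ω : Type*} [MeasurableSpace Ω] {μ : Measure Ω}

theorem integrable_inner_of_norm_le [IsFiniteMeasure μ] {X Y : Ω → E} {C₁ C₂ : ℝ}
    (hX : AEStronglyMeasurable X μ) (hY : AEStronglyMeasurable Y μ) (hXC : ∀ ω, ‖X ω‖ ≤ C₁)
    (hYC : ∀ ω, ‖Y ω‖ ≤ C₂) :
    Integrable (fun ω => ⟪X ω, Y ω⟫) μ :=
  .of_bound (hX.inner hY) (C₁ * C₂) <| ae_of_all _ fun ω =>
    (norm_inner_le_norm _ _).trans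
      (mul_le_mul (hXC ω) (hYC ω) (norm_nonneg _) ((norm_nonneg _).trans (hXC ω)))

theorem integrable_sum_mul_inner_sub [IsFiniteMeasure μ] {ι : Type*} [Fintype ι]
    {q : Ω → ι → ℝ} {C : ι → ℝ} {Z : Ω → E} {a : ι → E} {b : ι → ℝ}
    (hq : ∀ i, AEStronglyMeasurable (fun ω => q ω i) μ)
    (hqC : ∀ i, ∀ᵐ ω ∂μ, ‖q ω i‖ ≤ C i) (hZ : Integrable Z μ) :
    Integrable (fun ω => ∑ i, q ω i * (⟪a i, Z ω⟫ - b i)) μ :=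
  integrable_finsetSum _ fun i _ =>
    ((hZ.const_inner (a i)).sub (integrable_const _)).bdd_mul (hq i) (hqC i)

variable [IsProbabilityMeasure μ] [CompleteSpace E]

theorem ConvexOn.inner_sub_le_of_hasGradientAt {s : Set E} {f : E → ℝ} {g z y : E}
    (hf : ConvexOn ℝ s f) (hz : z ∈ s) (hy : y ∈ s) (hg : HasGradientAt f g z) :
    ⟪g, y - z⟫ ≤ f y - f z := by
  have hline : ConvexOn ℝ (AffineMap.lineMap z y ⁻¹' s) (f ∘ AffineMap.lineMap z y) :=
    hf.comp_affineMap _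
  have hderiv : HasDerivAt (f ∘ AffineMap.lineMap z y) ⟪g, y - z⟫ (0 : ℝ) := by
    simpa using
      hg.hasFDerivAt.comp_hasDerivAt_of_eq (0 : ℝ) AffineMap.hasDerivAt_lineMap (by simp)
  simpa [slope_def_field] using
    hline.le_slope_of_hasDerivAt (x := 0) (y := 1) (by simpa using hz) (by simpa using hy)
      zero_lt_one hderiv

variable [MeasurableSpace E] [BorelSpace E]

theorem measurable_of_hasGradientAt {f : E → ℝ} {f' : E → E}
    (h : ∀ z, HasGradientAt f (f' z) z) : Measurable f' := by
  have : f' = fun z => (InnerProductSpace.toDual ℝ E).symm (fderiv ℝ f z) :=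
    funext fun z => (h z).gradient.symm
  rw [this]
  exact (InnerProductSpace.toDual ℝ E).symm.continuous.measurable.comp (measurable_fderiv ℝ f)

theorem integral_inner_sub_le_of_indepFun {s : Set E} (hs : Convex ℝ s) (hsc : IsClosed s)
    {f : E → ℝ} {f' : E → E} (hf : ConvexOn ℝ s f) (hgrad : ∀ z ∈ s, HasGradientAt f (f' z) z)
    {Y v : Ω → E} (hY : ∀ ω, Y ω ∈ s) (hv : ∀ ω, v ω ∈ s) (hvi : Integrable v μ)
    (hG : Integrable (fun ω => f' (Y ω)) μ) (hGY : Integrable (fun ω => ⟪f' (Y ω), Y ω⟫) μ)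
    (hfY : Integrable (fun ω => f (Y ω)) μ) (hind : IndepFun (fun ω => f' (Y ω)) v μ) :
    ∫ ω, ⟪f' (Y ω), v ω - Y ω⟫ ∂μ ≤ f (∫ ω, v ω ∂μ) - ∫ ω, f (Y ω) ∂μ := by
  set vbar := ∫ ω, v ω ∂μ
  have hvbar : vbar ∈ s := hs.integral_mem hsc (ae_of_all _ hv) hvi
  have hGv : Integrable (fun ω => ⟪f' (Y ω), v ω⟫) μ := hind.integrable_bilin hG hvi (innerSL ℝ)
  have hmean : ∫ ω, ⟪f' (Y ω), v ω⟫ ∂μ = ∫ ω, ⟪f' (Y ω), vbar⟫ ∂μ := by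
    calc ∫ ω, ⟪f' (Y ω), v ω⟫ ∂μ = ⟪∫ ω, f' (Y ω) ∂μ, vbar⟫ :=
          hind.integral_bilin hG hvi (innerSL ℝ)
      _ = ∫ ω, ⟪f' (Y ω), vbar⟫ ∂μ := by
        rw [real_inner_comm, ← integral_inner hG]
        simp_rw [real_inner_comm vbar]
  calc ∫ ω, ⟪f' (Y ω), v ω - Y ω⟫ ∂μ
      = ∫ ω, (⟪f' (Y ω), vbar⟫ - ⟪f' (Y ω), Y ω⟫) ∂μ := by
        simp_rw [inner_sub_right]
        rw [integral_sub hGv hGY, integral_sub (hG.inner_const vbar) hGY, hmean]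
    _ ≤ ∫ ω, (f vbar - f (Y ω)) ∂μ :=
        integral_mono ((hG.inner_const vbar).sub hGY) ((integrable_const _).sub hfY) fun ω => by
          simpa [inner_sub_right] using
            hf.inner_sub_le_of_hasGradientAt (hY ω) hvbar (hgrad _ (hY ω))
    _ = f vbar - ∫ ω, f (Y ω) ∂μ := by
        rw [integral_sub (integrable_const _) hfY, integral_const]; simp

variable {ι : Type*} [Fintype ι]

theorem integral_sum_mul_inner_sub_nonpos {q : Ω → ι → ℝ} {v : Ω → E} {a : ι → E} {b : ι → ℝ}
    (hq0 : ∀ ω i, 0 ≤ q ω i) (hq : ∀ i, Integrable (fun ω => q ω i) μ) (hv : Integrable v μ)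
    (hind : ∀ i, IndepFun (fun ω => q ω i) v μ) (hfeas : ∀ i, ⟪a i, ∫ ω, v ω ∂μ⟫ ≤ b i) :
    ∫ ω, ∑ i, q ω i * (⟪a i, v ω⟫ - b i) ∂μ ≤ 0 := by
  have hind' : ∀ i, IndepFun (fun ω => q ω i) (fun ω => ⟪a i, v ω⟫ - b i) μ := fun i =>
    (hind i).comp measurable_id (by fun_prop : Measurable fun z : E => ⟪a i, z⟫ - b i)
  have hint : ∀ i, Integrable (fun ω => ⟪a i, v ω⟫ - b i) μ := fun i =>
    (hv.const_inner (a i)).sub (integrable_const _)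
  have hprod : ∀ i, Integrable (fun ω => q ω i * (⟪a i, v ω⟫ - b i)) μ := fun i =>
    (hind' i).integrable_mul (hq i) (hint i)
  rw [integral_finsetSum _ fun i _ => hprod i]
  refine Finset.sum_nonpos fun i _ => ?_
  rw [(hind' i).integral_fun_mul_eq_mul_integral (hq i).1 (hint i).1,
    integral_sub (hv.const_inner (a i)) (integrable_const _), integral_inner hv, integral_const]
  simpa using mul_nonpos_of_nonneg_of_nonpos (integral_nonneg (hq0 · i)) (sub_nonpos.2 (hfeas i))

theorem integral_drift_plus_penalty_le {s : Set E} (hs : Convex ℝ s) (hsc : IsClosed s) {R : ℝ}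
    (hR : ∀ z ∈ s, ‖z‖ ≤ R) {f : E → ℝ} {f' : E → E} (hf : ConvexOn ℝ s f)
    (hgrad : ∀ z, HasGradientAt f (f' z) z) {M K : ℝ} (hM : ∀ z ∈ s, ‖f' z‖ ≤ M)
    (hK : ∀ z ∈ s, |f z| ≤ K) {X Y v : Ω → E} (hX : ∀ ω, X ω ∈ s) (hY : ∀ ω, Y ω ∈ s)
    (hv : ∀ ω, v ω ∈ s) (hXm : AEStronglyMeasurable X μ) (hYm : AEStronglyMeasurable Y μ)
    (hvi : Integrable v μ) (hGm : AEStronglyMeasurable (fun ω => f' (Y ω)) μ)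
    {q : Ω → ι → ℝ} {C : ι → ℝ} (hq : ∀ ω i, q ω i ∈ Set.Icc 0 (C i))
    (hqm : ∀ i, AEStronglyMeasurable (fun ω => q ω i) μ)
    (hGind : IndepFun (fun ω => f' (Y ω)) v μ) (hqind : ∀ i, IndepFun (fun ω => q ω i) v μ)
    {a : ι → E} {b : ι → ℝ} (hfeas : ∀ i, ⟪a i, ∫ ω, v ω ∂μ⟫ ≤ b i) {V : ℝ} (hV : 0 ≤ V)
    (hopt : ∀ᵐ ω ∂μ, V * ⟪f' (Y ω), X ω⟫ + ∑ i, q ω i * ⟪a i, X ω⟫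
      ≤ V * ⟪f' (Y ω), v ω⟫ + ∑ i, q ω i * ⟪a i, v ω⟫) :
    ∫ ω, V * ⟪f' (Y ω), X ω - Y ω⟫ ∂μ + ∫ ω, ∑ i, q ω i * (⟪a i, X ω⟫ - b i) ∂μ
      ≤ V * (f (∫ ω, v ω ∂μ) - ∫ ω, f (Y ω) ∂μ) := by
  have hGM : ∀ ω, ‖f' (Y ω)‖ ≤ M := fun ω => hM _ (hY ω)
  have hqC : ∀ i, ∀ᵐ ω ∂μ, ‖q ω i‖ ≤ C i := fun i => ae_of_all _ fun ω => by
    simpa [abs_of_nonneg (hq ω i).1] using (hq ω i).2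
  have hXi : Integrable X μ := .of_bound hXm R (ae_of_all _ fun ω => hR _ (hX ω))
  have hsub : ∀ {Z : Ω → E}, AEStronglyMeasurable Z μ → (∀ ω, Z ω ∈ s) →
      Integrable (fun ω => V * ⟪f' (Y ω), Z ω - Y ω⟫) μ := fun hZm hZ =>
    (integrable_inner_of_norm_le hGm (hZm.sub hYm) hGM fun ω =>
      (norm_sub_le _ _).trans (add_le_add (hR _ (hZ ω)) (hR _ (hY ω)))).const_mul V
  have hfY : Integrable (fun ω => f (Y ω)) μ :=
    .of_bound ((continuous_iff_continuousAt.2 fun z => (hgrad z).continuousAt)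
      |>.comp_aestronglyMeasurable hYm) K (ae_of_all _ fun ω => hK _ (hY ω))
  have hgrad_term : ∫ ω, V * ⟪f' (Y ω), v ω - Y ω⟫ ∂μ
      ≤ V * (f (∫ ω, v ω ∂μ) - ∫ ω, f (Y ω) ∂μ) := by
    rw [integral_const_mul]
    exact mul_le_mul_of_nonneg_left (integral_inner_sub_le_of_indepFun hs hsc hf
      (fun z _ => hgrad z) hY hv hvi (.of_bound hGm M (ae_of_all _ hGM))
      (integrable_inner_of_norm_le hGm hYm hGM fun ω => hR _ (hY ω)) hfY hGind) hV
  have hqueue_term : ∫ ω, ∑ i, q ω i * (⟪a i, v ω⟫ - b i) ∂μ ≤ 0 :=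
    integral_sum_mul_inner_sub_nonpos (fun ω i => (hq ω i).1)
      (fun i => .of_bound (hqm i) (C i) (hqC i)) hvi hqind hfeas
  have hpointwise : ∀ᵐ ω ∂μ, V * ⟪f' (Y ω), X ω - Y ω⟫ + ∑ i, q ω i * (⟪a i, X ω⟫ - b i)
      ≤ V * ⟪f' (Y ω), v ω - Y ω⟫ + ∑ i, q ω i * (⟪a i, v ω⟫ - b i) := by
    filter_upwards [hopt] with ω h
    simp only [inner_sub_right, mul_sub, Finset.sum_sub_distrib]
    linarith
  have hXq := integrable_sum_mul_inner_sub (a := a) (b := b) hqm hqC hXi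
  have hvq := integrable_sum_mul_inner_sub (a := a) (b := b) hqm hqC hvi
  calc _ = ∫ ω, (V * ⟪f' (Y ω), X ω - Y ω⟫ + ∑ i, q ω i * (⟪a i, X ω⟫ - b i)) ∂μ :=
        (integral_add (hsub hXm hX) hXq).symm
    _ ≤ ∫ ω, (V * ⟪f' (Y ω), v ω - Y ω⟫ + ∑ i, q ω i * (⟪a i, v ω⟫ - b i)) ∂μ :=
        integral_mono_ae ((hsub hXm hX).add hXq) ((hsub hvi.1 hv).add hvq) hpointwise
    _ = ∫ ω, V * ⟪f' (Y ω), v ω - Y ω⟫ ∂μ + ∫ ω, ∑ i, q ω i * (⟪a i, v ω⟫ - b i) ∂μ :=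
        integral_add (hsub hvi.1 hv) hvq
    _ ≤ _ := by linarith

end

theorem stmt1_general
    {d N : ℕ}
    {Ω : Type*} {m0 : MeasurableSpace Ω} (μ : Measure Ω) [IsProbabilityMeasure μ]
    (ℋ : Filtration ℕ m0)
    (Bset : Set (EuclideanSpace ℝ (Fin d)))
    (hBconv : Convex ℝ Bset) (hBcpt : IsCompact Bset)
    (hB0 : (0 : EuclideanSpace ℝ (Fin d)) ∈ Bset)
    (f : EuclideanSpace ℝ (Fin d) → ℝ) (f' : EuclideanSpace ℝ (Fin d) → EuclideanSpace ℝ (Fin d)) (M K : ℝ)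
    (hgrad : ∀ z, HasGradientAt f (f' z) z)
    (hM : ∀ z ∈ Bset, ‖f' z‖ ≤ M)
    (hK : ∀ z ∈ Bset, |f z| ≤ K)
    (a : Fin N → EuclideanSpace ℝ (Fin d)) (b : Fin N → ℝ)
    (x : ℕ → Ω → EuclideanSpace ℝ (Fin d))
    (hxB : ∀ t ω, x t ω ∈ Bset)
    (hxmeas : ∀ t, Measurable[ℋ (t + 1)] (x t))
    (η V : ℝ) (hη0 : 0 < η) (hη1 : η < 1) (hV : 0 < V)
    (Q : ℕ → Ω → EuclideanSpace ℝ (Fin N))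
    (hQ0 : ∀ ω, Q 0 ω = 0)
    (hQrec : ∀ t ω i, Q (t + 1) ω i = max (Q t ω i + (inner ℝ (a i) (x t ω) : ℝ) - b i) 0)
    (γ : ℕ → Ω → EuclideanSpace ℝ (Fin d))
    (hγ0 : ∀ ω, γ 0 ω = 0)
    (hγrec : ∀ t ω, γ (t + 1) ω = (1 - η) • γ t ω + η • x t ω)
    (hconv : ConvexOn ℝ Bset f)
    (t : ℕ)
    (v : Ω → EuclideanSpace ℝ (Fin d)) (hvB : ∀ ω, v ω ∈ Bset)
    (hvint : Integrable v μ)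
    (hvindep : Indep (MeasurableSpace.comap v inferInstance) (ℋ t) μ)
    (γbar : EuclideanSpace ℝ (Fin d)) (hγbar : γbar = ∫ ω, v ω ∂μ)
    (hγbarfeas : ∀ i, (inner ℝ (a i) γbar : ℝ) ≤ b i)
    (hopt : ∀ᵐ ω ∂μ,
      V * (inner ℝ (f' (γ t ω)) (x t ω) : ℝ) + ∑ i, Q t ω i * (inner ℝ (a i) (x t ω) : ℝ)
        ≤ V * (inner ℝ (f' (γ t ω)) (v ω) : ℝ) + ∑ i, Q t ω i * (inner ℝ (a i) (v ω) : ℝ)) :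
    (∫ ω, V * (inner ℝ (f' (γ t ω)) (x t ω - γ t ω) : ℝ) ∂μ)
      + (∫ ω, ∑ i, Q t ω i * ((inner ℝ (a i) (x t ω) : ℝ) - b i) ∂μ)
      ≤ V * (f γbar - ∫ ω, f (γ t ω) ∂μ) := by
  obtain ⟨R, hR⟩ := hBcpt.isBounded.exists_norm_le
  have hγB : ∀ ω, γ t ω ∈ Bset := fun ω =>
    hBconv.mem_of_movingAverage (γ := (γ · ω)) hη0.le hη1.le (hγ0 ω ▸ hB0) (hxB · ω)
      (hγrec · ω) t
  have hQ : ∀ ω i, Q t ω i ∈ Set.Icc 0 (t * (‖a i‖ * R + |b i|)) := fun ω i =>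
    mem_Icc_of_queue_recursion (q := (Q · ω i)) (fun s => hR _ (hxB s ω)) (by simp [hQ0])
      (fun s => hQrec s ω i) t
  have hγm : Measurable[ℋ t] (γ t) :=
    ℋ.measurable_of_recursion (F := fun g y => (1 - η) • g + η • y) (by fun_prop)
      (by rw [funext hγ0]; exact measurable_const) hxmeas hγrec t
  have hQm : ∀ i, Measurable[ℋ t] (fun ω => Q t ω i) := fun i =>
    ℋ.measurable_of_recursion (Z := fun s ω => Q s ω i)
      (F := fun q y => max (q + ⟪a i, y⟫ - b i) 0) (by fun_prop) (by simp [hQ0]) hxmeas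
      (fun s ω => hQrec s ω i) t
  have hGm : Measurable[ℋ t] (fun ω => f' (γ t ω)) := (measurable_of_hasGradientAt hgrad).comp hγm
  subst hγbar
  exact integral_drift_plus_penalty_le (q := fun ω i => Q t ω i) hBconv hBcpt.isClosed hR hconv
    hgrad hM hK (hxB t) hγB hvB ((hxmeas t).mono (ℋ.le _) le_rfl).aestronglyMeasurable
    (hγm.mono (ℋ.le t) le_rfl).aestronglyMeasurable hvint
    (hGm.mono (ℋ.le t) le_rfl).aestronglyMeasurable hQ
    (fun i => ((hQm i).mono (ℋ.le t) le_rfl).aestronglyMeasurable)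
    (indepFun_of_indep_comap hvindep hGm) (fun i => indepFun_of_indep_comap hvindep (hQm i))
    hγbarfeas hV.le hopt

theorem stmt1
    {d N : ℕ}
    {Ω : Type*} {m0 : MeasurableSpace Ω} (μ : Measure Ω) [IsProbabilityMeasure μ]
    (ℋ : Filtration ℕ m0)
    (Bset : Set (EuclideanSpace ℝ (Fin d))) (D : ℝ)
    (hBconv : Convex ℝ Bset) (hBcpt : IsCompact Bset)
    (hB0 : (0 : EuclideanSpace ℝ (Fin d)) ∈ Bset)
    (hBD : ∀ z ∈ Bset, ∀ w ∈ Bset, ‖z - w‖ ≤ D)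
    (f : EuclideanSpace ℝ (Fin d) → ℝ) (f' : EuclideanSpace ℝ (Fin d) → EuclideanSpace ℝ (Fin d)) (L M K : ℝ)
    (hgrad : ∀ z, HasGradientAt f (f' z) z)
    (hLip : ∀ z ∈ Bset, ∀ w ∈ Bset, ‖f' z - f' w‖ ≤ L * ‖z - w‖)
    (hM : ∀ z ∈ Bset, ‖f' z‖ ≤ M)
    (hK : ∀ z ∈ Bset, |f z| ≤ K)
    (a : Fin N → EuclideanSpace ℝ (Fin d)) (b : Fin N → ℝ)
    (x : ℕ → Ω → EuclideanSpace ℝ (Fin d))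
    (hxB : ∀ t ω, x t ω ∈ Bset)
    (hxmeas : ∀ t, Measurable[ℋ (t + 1)] (x t))
    (η V : ℝ) (hη0 : 0 < η) (hη1 : η < 1) (hV : 0 < V)
    (Q : ℕ → Ω → EuclideanSpace ℝ (Fin N))
    (hQ0 : ∀ ω, Q 0 ω = 0)
    (hQrec : ∀ t ω i, Q (t + 1) ω i = max (Q t ω i + (inner ℝ (a i) (x t ω) : ℝ) - b i) 0)
    (γ : ℕ → Ω → EuclideanSpace ℝ (Fin d))
    (hγ0 : ∀ ω, γ 0 ω = 0)
    (hγrec : ∀ t ω, γ (t + 1) ω = (1 - η) • γ t ω + η • x t ω)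
    (hconv : ConvexOn ℝ Bset f)
    (t : ℕ)
    (v : Ω → EuclideanSpace ℝ (Fin d)) (hvB : ∀ ω, v ω ∈ Bset)
    (hvmeas : Measurable v) (hvint : Integrable v μ)
    (hvindep : Indep (MeasurableSpace.comap v inferInstance) (ℋ t) μ)
    (γbar : EuclideanSpace ℝ (Fin d)) (hγbar : γbar = ∫ ω, v ω ∂μ)
    (hγbarfeas : ∀ i, (inner ℝ (a i) γbar : ℝ) ≤ b i)
    (hopt : ∀ᵐ ω ∂μ,
      V * (inner ℝ (f' (γ t ω)) (x t ω) : ℝ) + ∑ i, Q t ω i * (inner ℝ (a i) (x t ω) : ℝ)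
        ≤ V * (inner ℝ (f' (γ t ω)) (v ω) : ℝ) + ∑ i, Q t ω i * (inner ℝ (a i) (v ω) : ℝ)) :
    (∫ ω, V * (inner ℝ (f' (γ t ω)) (x t ω - γ t ω) : ℝ) ∂μ)
      + (∫ ω, ∑ i, Q t ω i * ((inner ℝ (a i) (x t ω) : ℝ) - b i) ∂μ)
      ≤ V * (f γbar - ∫ ω, f (γ t ω) ∂μ) :=
  stmt1_general μ ℋ Bset hBconv hBcpt hB0 f f' M K hgrad hM hK a b x hxB hxmeas η V hη0 hη1 hV Q hQ0
    hQrec γ hγ0 hγrec hconv t v hvB hvint hvindep γbar hγbar hγbarfeas hopt
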